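/- arXiv:2411.08184 — 8 statements merged into one kernel-verified Lean document; each statement's English description precedes it below -/
import Mathlib

section
/- Every doubly nonnegative real matrix of rank at most 2 is completely positive. That is, if M is an n×n real symmetric matrix that is positive semidefinite, has all entries nonnegative, and has rank ≤ 2, then M can be written as a finite sum of matrices x xᵀ with x ∈ ℝⁿ having nonnegative entries. -/
/-!
A positive semidefinite matrix of rank at most `2` is the Gram matrix `M i j = bᵢ ⬝ bⱼ` of
vectors `bᵢ ∈ ℝ²`, obtained from its spectral decomposition. If `M` is entrywise nonnegative,
these planar vectors make pairwise angles of at most `π/2`, so they fit in a quarter-plane: after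
rotating the clockwise-extreme one onto the positive `x`-axis, all of them lie in the closed
first quadrant. The two coordinate rows `x₁, x₂` of the rotated vectors are then nonnegative and
`M = x₁ x₁ᵀ + x₂ x₂ᵀ`.
-/

open Matrix

theorem Fintype.exists_sum_fin_eq_of_card_support_le {ι α β : Type*} [Fintype ι] [Zero α]
    [AddCommMonoid β] {f : α → β} (hf : f 0 = 0) (a : ι → α) {r : ℕ}
    (hr : Nat.card {k // a k ≠ 0} ≤ r) :
    ∃ b : Fin r → α, ∑ k, f (a k) = ∑ l, f (b l) := by
  classical
  obtain ⟨e⟩ : Nonempty ({k // a k ≠ 0} ↪ Fin r) :=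
    Function.Embedding.nonempty_of_card_le (by rwa [Fintype.card_fin, ← Nat.card_eq_fintype_card])
  have ha : ∀ k, f (a k) ≠ 0 → a k ≠ 0 := fun k hk h => hk (by rw [h, hf])
  refine ⟨Function.extend e (fun k => a k) 0, Finset.sum_bij_ne_zero
    (fun k _ hk => e ⟨k, ha k hk⟩) (by simp) (fun _ _ _ _ _ _ h => by simpa using h) ?_ ?_⟩
  · intro l _ hl
    by_cases hle : ∃ k, e k = l
    · obtain ⟨k, rfl⟩ := hle
      refine ⟨k, Finset.mem_univ _, ?_, rfl⟩
      rwa [e.injective.extend_apply] at hl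
    · rw [Function.extend_apply' _ _ _ hle, Pi.zero_apply, hf] at hl
      exact absurd rfl hl
  · intro k _ _
    rw [e.injective.extend_apply]

theorem Matrix.transpose_mul_eq_sum_vecMulVec {m n p R : Type*} [Fintype m] [CommSemiring R]
    (B : Matrix m n R) (C : Matrix m p R) : Bᵀ * C = ∑ l, vecMulVec (B l) (C l) := by
  ext i j
  simp [mul_apply, vecMulVec_apply, Matrix.sum_apply]

theorem dotProduct_self_pos {n : Type*} [Fintype n] {v : n → ℝ} (hv : v ≠ 0) : 0 < v ⬝ᵥ v := by
  simpa using dotProduct_star_self_pos_iff.2 hv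

theorem Matrix.PosSemidef.exists_eq_mul_transpose_of_eigenvalues {n : Type*} [Fintype n]
    [DecidableEq n] {M : Matrix n n ℝ} (hM : M.PosSemidef) :
    ∃ A : Matrix n n ℝ, M = A * Aᵀ ∧ ∀ k, hM.1.eigenvalues k = 0 → Aᵀ k = 0 := by
  set U : Matrix n n ℝ := (hM.1.eigenvectorUnitary : Matrix n n ℝ)
  set D := diagonal fun k => √(hM.1.eigenvalues k)
  refine ⟨U * D, ?_, fun k hk => ?_⟩
  · have hD : D * D = diagonal (RCLike.ofReal ∘ hM.1.eigenvalues) := by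
      rw [diagonal_mul_diagonal]
      congr 1
      funext k
      exact Real.mul_self_sqrt (hM.eigenvalues_nonneg k)
    conv_lhs => rw [hM.1.spectral_theorem, Unitary.conjStarAlgAut_apply, ← hD]
    rw [transpose_mul, diagonal_transpose, star_eq_conjTranspose,
      conjTranspose_eq_transpose_of_trivial]
    simp only [D, U, Matrix.mul_assoc]
  · ext i
    simp [D, hk]

theorem Matrix.PosSemidef.exists_eq_transpose_mul_of_rank_le {n : Type*} [Fintype n]
    [DecidableEq n] {M : Matrix n n ℝ} (hM : M.PosSemidef) {r : ℕ} (hr : M.rank ≤ r) :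
    ∃ B : Matrix (Fin r) n ℝ, M = Bᵀ * B := by
  obtain ⟨A, rfl, hA⟩ := hM.exists_eq_mul_transpose_of_eigenvalues
  have hcard : Nat.card {k // Aᵀ k ≠ 0} ≤ r := by
    refine le_trans ?_ (hM.1.rank_eq_card_non_zero_eigs ▸ hr)
    rw [← Nat.card_eq_fintype_card]
    exact Nat.card_mono (Set.toFinite _) fun k hk => mt (hA k) hk
  obtain ⟨B, hB⟩ :=
    Fintype.exists_sum_fin_eq_of_card_support_le (f := fun v => vecMulVec v v) (by simp) Aᵀ hcard
  rw [← transpose_mul_eq_sum_vecMulVec, transpose_transpose] at hB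
  exact ⟨of B, hB.trans (transpose_mul_eq_sum_vecMulVec _ _).symm⟩

def perpDot (v w : Fin 2 → ℝ) : ℝ := v 0 * w 1 - v 1 * w 0

theorem dotProduct_self_mul_perpDot (s u v : Fin 2 → ℝ) :
    (s ⬝ᵥ s) * perpDot u v = (s ⬝ᵥ u) * perpDot s v - perpDot s u * (s ⬝ᵥ v) := by
  simp only [perpDot, dotProduct, Fin.sum_univ_two]
  ring

theorem exists_ne_zero_forall_dotProduct_nonneg_perpDot_nonneg {ι : Type*} [Fintype ι]
    (b : ι → Fin 2 → ℝ) (hb : ∀ i j, 0 ≤ b i ⬝ᵥ b j) :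
    ∃ w ≠ 0, ∀ j, 0 ≤ w ⬝ᵥ b j ∧ 0 ≤ perpDot w (b j) := by
  classical
  by_cases hzero : ∀ i, b i = 0
  · exact ⟨Pi.single 0 1, by simp, fun j => by simp [hzero j, perpDot]⟩
  push Not at hzero
  set s := ∑ i, b i
  have hs : ∀ j, b j ≠ 0 → 0 < s ⬝ᵥ b j := fun j hj => by
    rw [sum_dotProduct]
    exact (dotProduct_self_pos hj).trans_le
      (Finset.single_le_sum (fun i _ => hb i j) (Finset.mem_univ j))
  -- Seen from `s`, every nonzero `b j` has a slope `perpDot s (b j) / s ⬝ᵥ b j`; the one of least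
  -- slope is the clockwise-extreme vector, by `dotProduct_self_mul_perpDot`.
  obtain ⟨k, hk, hmin⟩ := (Finset.univ.filter (b · ≠ 0)).exists_min_image
    (fun k => perpDot s (b k) / (s ⬝ᵥ b k)) (by simpa [Finset.filter_nonempty_iff] using hzero)
  rw [Finset.mem_filter] at hk
  have hss : 0 < s ⬝ᵥ s := dotProduct_self_pos fun h => by simpa [h] using hs k hk.2
  refine ⟨b k, hk.2, fun j => ⟨hb k j, ?_⟩⟩
  by_cases hj : b j = 0
  · simp [hj, perpDot]
  have hslope := hmin j (by simp [hj])
  rw [div_le_div_iff₀ (hs k hk.2) (hs j hj)] at hslope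
  refine (mul_nonneg_iff_of_pos_left hss).1 ?_
  rw [dotProduct_self_mul_perpDot]
  linarith

theorem rotation_mul_transpose (w : Fin 2 → ℝ) :
    !![w 0, w 1; -w 1, w 0] * !![w 0, w 1; -w 1, w 0]ᵀ = (w ⬝ᵥ w) • 1 := by
  ext i j
  fin_cases i <;> fin_cases j <;> simp [mul_apply, dotProduct, Fin.sum_univ_two] <;> ring

theorem smul_rotation_mem_orthogonalGroup {w : Fin 2 → ℝ} (hw : w ≠ 0) :
    (√(w ⬝ᵥ w))⁻¹ • !![w 0, w 1; -w 1, w 0] ∈ orthogonalGroup (Fin 2) ℝ := by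
  have hsq : √(w ⬝ᵥ w) * √(w ⬝ᵥ w) = w ⬝ᵥ w := Real.mul_self_sqrt (dotProduct_self_pos hw).le
  rw [mem_orthogonalGroup_iff, transpose_smul, smul_mul_smul_comm, ← mul_inv, hsq,
    rotation_mul_transpose, smul_smul, inv_mul_cancel₀ (dotProduct_self_pos hw).ne', one_smul]

theorem exists_mem_orthogonalGroup_mulVec_nonneg {ι : Type*} [Fintype ι]
    (b : ι → Fin 2 → ℝ) (hb : ∀ i j, 0 ≤ b i ⬝ᵥ b j) :
    ∃ Q ∈ orthogonalGroup (Fin 2) ℝ, ∀ j, 0 ≤ Q *ᵥ b j := by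
  obtain ⟨w, hw, hwb⟩ := exists_ne_zero_forall_dotProduct_nonneg_perpDot_nonneg b hb
  refine ⟨_, smul_rotation_mem_orthogonalGroup hw, fun j k => ?_⟩
  rw [smul_mulVec, Pi.smul_apply, smul_eq_mul]
  refine mul_nonneg (by positivity) ?_
  fin_cases k
  · simpa [mulVec, dotProduct, Fin.sum_univ_two] using (hwb j).1
  · simpa [mulVec, dotProduct, Fin.sum_univ_two, perpDot, sub_eq_add_neg] using (hwb j).2

/-- Every doubly nonnegative real matrix of rank at most 2 is completely
positive: it is a finite sum of `x xᵀ` with `x` entrywise nonnegative. -/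
theorem doublyNonneg_rank_two_completelyPositive {n : ℕ}
    (M : Matrix (Fin n) (Fin n) ℝ)
    (hPSD : M.PosSemidef) (hNonneg : ∀ i j, 0 ≤ M i j) (hrank : M.rank ≤ 2) :
    ∃ (k : ℕ) (x : Fin k → (Fin n → ℝ)),
      (∀ i j, 0 ≤ x i j) ∧ M = ∑ i, Matrix.vecMulVec (x i) (x i) := by
  obtain ⟨B, rfl⟩ := hPSD.exists_eq_transpose_mul_of_rank_le hrank
  obtain ⟨Q, hQ, hQB⟩ := exists_mem_orthogonalGroup_mulVec_nonneg Bᵀ hNonneg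
  refine ⟨2, Q * B, fun k j => hQB j k, ?_⟩
  rw [← transpose_mul_eq_sum_vecMulVec, transpose_mul, Matrix.mul_assoc, ← Matrix.mul_assoc Qᵀ,
    (mem_orthogonalGroup_iff' _ _).1 hQ, Matrix.one_mul]
end

section
/- Let ε ∈ (0, 0.05) and define φ_ε : [−ε, π/2 + ε] → [0, π/2] by φ_ε(x) = 0 if x ∈ [−ε, √ε], φ_ε(x) = π/2 if x ∈ [π/2 − √ε, π/2 + ε], and φ_ε(x) = x otherwise. Then for all x, y ∈ [−ε, π/2 + ε]: cos(x − y)² − 2√ε ≤ cos(φ_ε(x) − φ_ε(y))² ≤ (1 + 3√ε)·cos(x − y)². -/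
open Real

/-- cos² is 1-Lipschitz. -/
lemma cossq_lip (a b : ℝ) : Real.cos a ^ 2 - Real.cos b ^ 2 ≤ |a - b| := by
  have h := Real.cos_sq a
  have h2 := Real.cos_sq b
  have hc : Real.cos (2*a) - Real.cos (2*b) =
      -2 * Real.sin ((2*a + 2*b)/2) * Real.sin ((2*a - 2*b)/2) := Real.cos_sub_cos _ _
  have hs1 : |Real.sin ((2*a + 2*b)/2)| ≤ 1 := abs_le.2 ⟨Real.neg_one_le_sin _, Real.sin_le_one _⟩
  have hs2 : |Real.sin ((2*a - 2*b)/2)| ≤ |(2*a - 2*b)/2| := Real.abs_sin_le_abs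
  have : |Real.cos (2*a) - Real.cos (2*b)| ≤ 2 * |a - b| := by
    rw [hc]
    calc |(-2) * Real.sin ((2*a + 2*b)/2) * Real.sin ((2*a - 2*b)/2)|
        = 2 * |Real.sin ((2*a + 2*b)/2)| * |Real.sin ((2*a - 2*b)/2)| := by
          rw [abs_mul, abs_mul]; norm_num
      _ ≤ 2 * 1 * |(2*a - 2*b)/2| := by
          apply mul_le_mul (by nlinarith [abs_nonneg (Real.sin ((2*a + 2*b)/2))]) hs2
            (abs_nonneg _) (by positivity)
      _ = 2 * |a - b| := by rw [show (2*a - 2*b)/2 = a - b by ring]; ring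
  have := abs_le.1 this
  rw [h, h2]
  linarith [this.2]

/-- key numeric fact -/
lemma key_num (s : ℝ) (h0 : 0 ≤ s) (h : s^2 < 0.05) : 1 ≤ (1 + 3*s) * (1 - s)^2 := by
  nlinarith [sq_nonneg s, sq_nonneg (1 - 5*s), sq_nonneg (1 + 3*s^2 - 5*s), sq_nonneg (s*(1-s))]

set_option maxHeartbeats 1000000 in
/-- the sin-squared ratio lemma -/
lemma sinsq_ratio (ε s a b : ℝ) (hε : 0 < ε) (h05 : ε < 0.05) (hs : s = Real.sqrt ε)
    (ha1 : s ≤ a) (ha2 : a ≤ Real.pi / 2) (hb1 : a - ε ≤ b) (hb2 : b ≤ Real.pi / 2) :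
    Real.sin a ^ 2 ≤ (1 + 3*s) * Real.sin b ^ 2 := by
  have hs0 : 0 < s := hs ▸ Real.sqrt_pos.2 hε
  have hs2 : s^2 = ε := hs ▸ Real.sq_sqrt hε.le
  have hslt : s < 1 := by nlinarith
  have hεs : ε < s := by nlinarith
  have hb0 : 0 < b := by linarith
  have ha0 : 0 < a := by linarith
  have hsina : 0 ≤ Real.sin a := Real.sin_nonneg_of_nonneg_of_le_pi ha0.le (by linarith [Real.pi_pos])
  have hsinb : 0 ≤ Real.sin b := Real.sin_nonneg_of_nonneg_of_le_pi hb0.le (by linarith [Real.pi_pos])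
  rcases le_or_gt a b with hab | hab
  · have : Real.sin a ≤ Real.sin b :=
      Real.sin_le_sin_of_le_of_le_pi_div_two (by linarith [Real.pi_pos]) hb2 hab
    nlinarith
  · -- b < a, use sin a ≤ sin b / (1 - s)
    have hbpi2 : b < Real.pi / 2 := lt_of_lt_of_le hab ha2
    have hkey : (1 - s) * Real.sin a ≤ Real.sin b := by
      have hSS : Real.sin a - Real.sin b =
          2 * Real.sin ((a - b)/2) * Real.cos ((a + b)/2) := Real.sin_sub_sin _ _
      have h1 : Real.sin ((a - b)/2) ≤ (a - b)/2 := Real.sin_le (by linarith)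
      have h2 : Real.cos ((a + b)/2) ≤ Real.cos b := by
        apply Real.cos_le_cos_of_nonneg_of_le_pi hb0.le (by linarith [Real.pi_pos]) (by linarith)
      have hcb0 : 0 < Real.cos b := Real.cos_pos_of_mem_Ioo ⟨by linarith [Real.pi_pos], hbpi2⟩
      have htan : b < Real.tan b := Real.lt_tan hb0 hbpi2
      have hbc : b * Real.cos b < Real.sin b := by
        rw [Real.tan_eq_sin_div_cos] at htan
        calc b * Real.cos b < (Real.sin b / Real.cos b) * Real.cos b := by
              exact mul_lt_mul_of_pos_right htan hcb0
          _ = Real.sin b := by field_simp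
      -- sin a ≤ sin b + ε * cos b ;  ε * cos b ≤ (ε/b) * sin b ≤ (ε/(s-ε)) sin b = (s/(1-s)) sin b ... 
      have hsab : Real.sin a ≤ Real.sin b + ε * Real.cos b := by
        have hcosnn : 0 ≤ Real.cos ((a+b)/2) := by
          apply Real.cos_nonneg_of_mem_Icc
          constructor <;> [linarith; linarith]
        nlinarith [mul_le_mul h1 h2 hcosnn (by linarith)]
      -- ε cos b < ε sin b / b ≤ ε sin b / (s - ε)
      have hble : s - ε ≤ b := by linarith
      have hsε : 0 < s - ε := by linarith
      have hc2 : ε * (b * Real.cos b) ≤ ε * Real.sin b := by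
        exact mul_le_mul_of_nonneg_left hbc.le hε.le
      -- (s - ε) * cos b ≤ b * cos b
      have hc3 : ε * ((s - ε) * Real.cos b) ≤ ε * Real.sin b := by
        calc ε * ((s - ε) * Real.cos b) ≤ ε * (b * Real.cos b) := by
              apply mul_le_mul_of_nonneg_left (mul_le_mul_of_nonneg_right hble hcb0.le) hε.le
          _ ≤ ε * Real.sin b := hc2
      have hse : s - ε = s * (1 - s) := by nlinarith
      have h1s' : (0:ℝ) < 1 - s := by linarith
      have h4 : (1 - s) * (ε * Real.cos b) ≤ s * Real.sin b := by
        have h5 : s * ((1 - s) * (ε * Real.cos b)) ≤ s * (s * Real.sin b) := by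
          calc s * ((1 - s) * (ε * Real.cos b)) = ε * ((s - ε) * Real.cos b) := by
                rw [hse]; ring
            _ ≤ ε * Real.sin b := hc3
            _ = s * (s * Real.sin b) := by rw [← hs2]; ring
        exact le_of_mul_le_mul_left h5 hs0
      nlinarith [mul_le_mul_of_nonneg_left hsab h1s'.le, h4]
    have h1s : (0:ℝ) < 1 - s := by linarith
    have hsq : (1 - s)^2 * Real.sin a ^ 2 ≤ Real.sin b ^ 2 := by
      calc (1 - s)^2 * Real.sin a ^ 2 = ((1-s)*Real.sin a)*((1-s)*Real.sin a) := by ring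
        _ ≤ Real.sin b * Real.sin b := mul_le_mul hkey hkey (mul_nonneg h1s.le hsina) hsinb
        _ = Real.sin b ^ 2 := by ring
    have hnum := key_num s hs0.le (by rw [hs2]; exact h05)
    have hA := mul_le_mul_of_nonneg_left hsq (by positivity : (0:ℝ) ≤ 1 + 3*s)
    have hB := mul_le_mul_of_nonneg_right hnum (sq_nonneg (Real.sin a))
    nlinarith [hA, hB]

/-- close-to-zero case: |d| ≤ s + s² implies 1 ≤ (1+3s) cos d² -/
lemma one_le_case (s d : ℝ) (h0 : 0 < s) (h : s^2 < 0.05) (hd : |d| ≤ s + s^2) :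
    1 ≤ (1 + 3*s) * Real.cos d ^ 2 := by
  have h1 : 1 - d^2/2 ≤ Real.cos d := Real.one_sub_sq_div_two_le_cos
  have hslt : s < 0.25 := by nlinarith
  have hd2 : d^2 ≤ (s + s^2)^2 := by
    nlinarith [sq_abs d, mul_self_le_mul_self (abs_nonneg d) hd]
  have hpos : 0 < 1 - d^2/2 := by nlinarith
  have hsq : (1 - d^2/2)^2 ≤ Real.cos d ^ 2 := by nlinarith
  have c2 : s^2 < 0.25*s := by nlinarith
  have c3 : s^3 < 0.25*s^2 := by nlinarith
  have c4 : s^4 < 0.0625*s^2 := by nlinarith [mul_lt_mul_of_pos_left c3 h0]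
  have e1 : d^2 ≤ 1.5625 * s^2 := by nlinarith [hd2]
  have hu : d^2*(1+3*s) ≤ 3*s := by
    nlinarith [mul_le_mul_of_nonneg_right e1 (by positivity : (0:ℝ) ≤ 1+3*s), c2, c3]
  nlinarith [mul_le_mul_of_nonneg_left hsq (by positivity : (0:ℝ) ≤ 1 + 3*s),
    mul_nonneg (by positivity : (0:ℝ) ≤ 1+3*s) (sq_nonneg (d^2/2)), hu]

/-- Elementary trigonometric inequality: for `ε ∈ (0, 0.05)` and the map
`φ_ε` collapsing the ends of `[-ε, π/2 + ε]` onto `0` and `π/2`, for all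
`x, y ∈ [-ε, π/2 + ε]`,
`cos(x-y)² - 2√ε ≤ cos(φ_ε x - φ_ε y)² ≤ (1 + 3√ε)·cos(x-y)²`. -/
theorem trig_collapse_ineq (ε : ℝ) (hε : ε ∈ Set.Ioo (0 : ℝ) 0.05)
    (φ : ℝ → ℝ)
    (hφ : ∀ x, φ x = if x ≤ Real.sqrt ε then 0
      else if Real.pi / 2 - Real.sqrt ε ≤ x then Real.pi / 2 else x)
    (x y : ℝ) (hx : x ∈ Set.Icc (-ε) (Real.pi / 2 + ε))
    (hy : y ∈ Set.Icc (-ε) (Real.pi / 2 + ε)) :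
    Real.cos (x - y) ^ 2 - 2 * Real.sqrt ε ≤ Real.cos (φ x - φ y) ^ 2 ∧
    Real.cos (φ x - φ y) ^ 2 ≤ (1 + 3 * Real.sqrt ε) * Real.cos (x - y) ^ 2 := by
  obtain ⟨hε0, hε05⟩ := hε
  set s := Real.sqrt ε with hsdef
  have hs0 : 0 < s := Real.sqrt_pos.2 hε0
  have hs2 : s ^ 2 = ε := Real.sq_sqrt hε0.le
  have hsε05 : s ^ 2 < 0.05 := by rw [hs2]; exact hε05
  have hs14 : s < 0.25 := by nlinarith
  have hεs : ε < s := by nlinarith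
  have hpi : (3.141592 : ℝ) < Real.pi := Real.pi_gt_d6
  obtain ⟨hx1, hx2⟩ := hx
  obtain ⟨hy1, hy2⟩ := hy
  have phi_close : ∀ t, -ε ≤ t → t ≤ Real.pi / 2 + ε → |φ t - t| ≤ s := by
    intro t h1 h2
    rw [hφ t]
    split_ifs with htl hth
    · rw [zero_sub, abs_neg]
      exact abs_le.2 ⟨by linarith, htl⟩
    · exact abs_le.2 ⟨by linarith, by linarith⟩
    · simpa using hs0.le
  constructor
  · -- lower bound
    have hL := cossq_lip (x - y) (φ x - φ y)
    have hdx := phi_close x hx1 hx2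
    have hdy := phi_close y hy1 hy2
    have htri : |(x - y) - (φ x - φ y)| ≤ 2 * s := by
      have e : (x - y) - (φ x - φ y) = (x - φ x) - (y - φ y) := by ring
      rw [e]
      calc |(x - φ x) - (y - φ y)| ≤ |x - φ x| + |y - φ y| := abs_sub _ _
        _ ≤ s + s := by
            rw [abs_sub_comm x (φ x), abs_sub_comm y (φ y)]; exact add_le_add hdx hdy
        _ = 2 * s := by ring
    linarith
  · -- upper bound
    rw [hφ x, hφ y]
    split_ifs with hxa hya hyb hxb hya' hya'' hyb''
    · -- AA
      rw [sub_self, Real.cos_zero, one_pow]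
      apply one_le_case s (x - y) hs0 hsε05
      rw [hs2]
      exact abs_le.2 ⟨by linarith, by linarith⟩
    · -- AB
      rw [zero_sub, Real.cos_neg, Real.cos_pi_div_two]
      norm_num
      positivity
    · -- AC : x ≤ s, s < y < π/2 - s
      push_neg at hya hyb
      have e1 : Real.cos (0 - y) ^ 2 = Real.sin (Real.pi / 2 - y) ^ 2 := by
        rw [Real.sin_pi_div_two_sub, zero_sub, Real.cos_neg]
      have e2 : Real.cos (x - y) ^ 2 = Real.sin (Real.pi / 2 - y + x) ^ 2 := by
        rw [show Real.pi / 2 - y + x = Real.pi / 2 - (y - x) by ring,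
          Real.sin_pi_div_two_sub, show y - x = -(x - y) by ring, Real.cos_neg]
      rw [e1, e2]
      exact sinsq_ratio ε s _ _ hε0 hε05 hsdef (by linarith) (by linarith)
        (by linarith) (by linarith)
    · -- BA
      rw [sub_zero, Real.cos_pi_div_two]
      norm_num
      positivity
    · -- BB
      rw [sub_self, Real.cos_zero, one_pow]
      apply one_le_case s (x - y) hs0 hsε05
      rw [hs2]
      exact abs_le.2 ⟨by linarith, by linarith⟩
    · -- BC : π/2 - s ≤ x, s < y < π/2 - s
      push_neg at hya' hya''
      have e1 : Real.cos (Real.pi / 2 - y) ^ 2 = Real.sin y ^ 2 := by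
        rw [Real.cos_pi_div_two_sub]
      have e2 : Real.cos (x - y) ^ 2 = Real.sin (y + (Real.pi / 2 - x)) ^ 2 := by
        rw [show y + (Real.pi / 2 - x) = Real.pi / 2 - (x - y) by ring,
          Real.sin_pi_div_two_sub]
      rw [e1, e2]
      exact sinsq_ratio ε s _ _ hε0 hε05 hsdef (by linarith) (by linarith)
        (by linarith) (by linarith)
    · -- CA : s < x < π/2 - s, y ≤ s
      push_neg at hxa hxb
      have e1 : Real.cos (x - 0) ^ 2 = Real.sin (Real.pi / 2 - x) ^ 2 := by
        rw [Real.sin_pi_div_two_sub, sub_zero]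
      have e2 : Real.cos (x - y) ^ 2 = Real.sin (Real.pi / 2 - x + y) ^ 2 := by
        rw [show Real.pi / 2 - x + y = Real.pi / 2 - (x - y) by ring,
          Real.sin_pi_div_two_sub]
      rw [e1, e2]
      exact sinsq_ratio ε s _ _ hε0 hε05 hsdef (by linarith) (by linarith)
        (by linarith) (by linarith)
    · -- CB : s < x < π/2 - s, π/2 - s ≤ y
      push_neg at hxa hxb
      have e1 : Real.cos (x - Real.pi / 2) ^ 2 = Real.sin x ^ 2 := by
        rw [show x - Real.pi / 2 = -(Real.pi / 2 - x) by ring, Real.cos_neg,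
          Real.cos_pi_div_two_sub]
      have e2 : Real.cos (x - y) ^ 2 = Real.sin (x + (Real.pi / 2 - y)) ^ 2 := by
        rw [show x + (Real.pi / 2 - y) = Real.pi / 2 - (y - x) by ring,
          Real.sin_pi_div_two_sub, show y - x = -(x - y) by ring, Real.cos_neg]
      rw [e1, e2]
      exact sinsq_ratio ε s _ _ hε0 hε05 hsdef (by linarith) (by linarith)
        (by linarith) (by linarith)
    · -- CC
      nlinarith [sq_nonneg (Real.cos (x - y)), hs0.le]
end

section
/- Let v₁, …, vₙ ∈ ℝ² with vᵢ = rᵢ e^{iθᵢ} in polar form (rᵢ ≥ 0), and let X be their Gram matrix, X_{ij} = ⟨vᵢ, vⱼ⟩ = rᵢ rⱼ cos(θᵢ − θⱼ). Then (Σᵢ rᵢ²)² ≥ Σ_{i,j} X_{ij}² ≥ (1/2)(Σᵢ rᵢ²)². -/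
/-- For planar vectors `vᵢ = rᵢ e^{iθᵢ}` with Gram matrix
`X_{ij} = rᵢ rⱼ cos(θᵢ - θⱼ)`, we have
`(Σ rᵢ²)² ≥ Σ_{i,j} X_{ij}² ≥ (1/2)(Σ rᵢ²)²`. -/
theorem gram_sq_sum_bounds {n : ℕ} (r θ : Fin n → ℝ) (hr : ∀ i, 0 ≤ r i)
    (X : Matrix (Fin n) (Fin n) ℝ)
    (hX : ∀ i j, X i j = r i * r j * Real.cos (θ i - θ j)) :
    (∑ i, (r i) ^ 2) ^ 2 ≥ ∑ i, ∑ j, (X i j) ^ 2 ∧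
    ∑ i, ∑ j, (X i j) ^ 2 ≥ (1 / 2) * (∑ i, (r i) ^ 2) ^ 2 := by
  set P := ∑ i, r i ^ 2 * Real.cos (θ i) ^ 2 with hP
  set Q := ∑ i, r i ^ 2 * Real.sin (θ i) ^ 2 with hQ
  set R := ∑ i, r i ^ 2 * (Real.cos (θ i) * Real.sin (θ i)) with hR
  have hSplit : (∑ i, (r i) ^ 2) = P + Q := by
    rw [hP, hQ, ← Finset.sum_add_distrib]
    apply Finset.sum_congr rfl
    intro i _
    have := Real.sin_sq_add_cos_sq (θ i)
    nlinarith [this]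
  have hkey : ∑ i, ∑ j, (X i j) ^ 2 = P * P + 2 * (R * R) + Q * Q := by
    rw [hP, hQ, hR, Finset.sum_mul_sum, Finset.sum_mul_sum, Finset.sum_mul_sum,
      Finset.mul_sum, ← Finset.sum_add_distrib, ← Finset.sum_add_distrib]
    apply Finset.sum_congr rfl
    intro i _
    rw [Finset.mul_sum, ← Finset.sum_add_distrib, ← Finset.sum_add_distrib]
    apply Finset.sum_congr rfl
    intro j _
    rw [hX, Real.cos_sub]
    ring
  constructor
  · have hCS : R ^ 2 ≤ P * Q := by
      have := Finset.sum_mul_sq_le_sq_mul_sq Finset.univ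
        (fun i => r i * Real.cos (θ i)) (fun i => r i * Real.sin (θ i))
      rw [hP, hQ, hR]
      calc (∑ i, r i ^ 2 * (Real.cos (θ i) * Real.sin (θ i))) ^ 2
          = (∑ i, (r i * Real.cos (θ i)) * (r i * Real.sin (θ i))) ^ 2 := by
            congr 1; apply Finset.sum_congr rfl; intro i _; ring
        _ ≤ (∑ i, (r i * Real.cos (θ i)) ^ 2) * ∑ i, (r i * Real.sin (θ i)) ^ 2 := this
        _ = (∑ i, r i ^ 2 * Real.cos (θ i) ^ 2) * ∑ i, r i ^ 2 * Real.sin (θ i) ^ 2 := by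
            congr 1 <;> (apply Finset.sum_congr rfl; intro i _; ring)
    rw [hkey, hSplit]
    nlinarith [hCS]
  · rw [hkey, hSplit]
    nlinarith [sq_nonneg (P - Q), sq_nonneg R]
end

section
/- Let h : ℝ → ℝ be continuous, nonnegative, 2π-periodic, with Fourier coefficients c_n (so h(θ) = Σ_{n∈ℤ} c_n e^{inθ}, c_{-n} = conj(c_n)). For α ∈ ℝ let I₊^α = [α, α+π/2) ∪ [α+π, α+3π/2). Then (1/2π) ∫₀^{2π} |∫_{I₊^α} e^{2iθ} h(θ) dθ|² dα = π²|c₂|² + 16 Σ_{n ≡ 2 mod 4} |c_{n-2}|²/n² ≥ π²|c₂|² + 4|c₀|². -/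
/-!
Write `g(θ) = e^{2iθ} (h(θ) + h(θ + π))`. Substituting `θ ↦ θ + π` in the second integral shows
that `F(α) = ∫_0^{π/2} g(α + u) du` is a moving average of `g`, so its Fourier coefficients are
`F̂(m) = ĝ(m) ∫_0^{π/2} e^{imu} du`, and `ĝ(m) = (1 + (-1)^m) c_{m-2}`. The multiplier
`(1 + (-1)^m) ∫_0^{π/2} e^{imu} du` equals `π` at `m = 0`, has modulus `4/|m|` for `m ≡ 2 mod 4`
and vanishes otherwise, so Parseval's identity for `F` is the claimed identity (using
`|c_{-2}| = |c_2|`, as `h` is real). The inequality keeps only the term `n = 2`.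
-/

open scoped Real ComplexConjugate
open MeasureTheory Set AddCircle Function Complex

section Periodic

variable {T : ℝ} (hT : 0 < T)

theorem fourierCoeffOn_zero_eq_integral (f : ℝ → ℂ) (n : ℤ) :
    fourierCoeffOn hT f n = 1 / T * ∫ x in 0..T, fourier (-n) (x : AddCircle T) * f x := by
  rw [fourierCoeffOn_eq_integral, sub_zero, Complex.real_smul]
  push_cast
  rfl

theorem fourier_coe_add (n : ℤ) (x y : ℝ) :
    fourier n ((x + y : ℝ) : AddCircle T) =
      fourier n (x : AddCircle T) * fourier n (y : AddCircle T) := by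
  rw [AddCircle.coe_add, fourier_apply, zsmul_add, toCircle_add, Circle.coe_mul]
  rfl

theorem fourierCoeffOn_fourier_mul (f : ℝ → ℂ) (k n : ℤ) :
    fourierCoeffOn hT (fun x => fourier k (x : AddCircle T) * f x) n =
      fourierCoeffOn hT f (n - k) := by
  simp only [fourierCoeffOn_zero_eq_integral, ← mul_assoc, ← fourier_add]
  rw [neg_sub, sub_eq_neg_add]

theorem fourierCoeffOn_add {f g : ℝ → ℂ} (hf : Continuous f) (hg : Continuous g) (n : ℤ) :
    fourierCoeffOn hT (f + g) n = fourierCoeffOn hT f n + fourierCoeffOn hT g n := by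
  simp only [fourierCoeffOn_zero_eq_integral, Pi.add_apply, mul_add]
  rw [intervalIntegral.integral_add, mul_add] <;>
    exact (by fun_prop : Continuous _).intervalIntegrable _ _

theorem fourierCoeffOn_comp_add_right {f : ℝ → ℂ} (hf : Periodic f T) (s : ℝ) (n : ℤ) :
    fourierCoeffOn hT (fun x => f (x + s)) n =
      fourier n (s : AddCircle T) * fourierCoeffOn hT f n := by
  have hinv : fourier n (s : AddCircle T) * fourier (-n) (s : AddCircle T) = 1 := by
    rw [← fourier_add, add_neg_cancel, fourier_zero]
  have hshift : ∀ x : ℝ, fourier (-n) (x : AddCircle T) * f (x + s) =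
      fourier n (s : AddCircle T) * (fourier (-n) ((x + s : ℝ) : AddCircle T) * f (x + s)) := by
    intro x
    rw [fourier_coe_add]
    linear_combination (-(fourier (-n) (x : AddCircle T) * f (x + s))) * hinv
  have hper : Periodic (fun x : ℝ => fourier (-n) (x : AddCircle T) * f x) T := fun x => by
    simp only [AddCircle.coe_add_period, hf x]
  rw [fourierCoeffOn_zero_eq_integral, fourierCoeffOn_zero_eq_integral, funext hshift,
    intervalIntegral.integral_const_mul,
    intervalIntegral.integral_comp_add_right (fun x => fourier (-n) (x : AddCircle T) * f x),
    zero_add, add_comm T, hper.intervalIntegral_add_eq s 0, zero_add]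
  ring

theorem fourierCoeffOn_intervalIntegral_comp_add_left {g : ℝ → ℂ} (hg : Continuous g)
    (hgp : Periodic g T) (L : ℝ) (n : ℤ) :
    fourierCoeffOn hT (fun α => ∫ u in 0..L, g (α + u)) n =
      (∫ u in 0..L, fourier n (u : AddCircle T)) * fourierCoeffOn hT g n := by
  have hint : IntegrableOn (uncurry fun (α u : ℝ) => fourier (-n) (α : AddCircle T) * g (α + u))
      (uIoc 0 T ×ˢ uIoc 0 L) :=
    ((by fun_prop : Continuous (uncurry fun (α u : ℝ) => fourier (-n) (α : AddCircle T) * g (α + u)))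
      |>.continuousOn.integrableOn_compact (isCompact_uIcc.prod isCompact_uIcc)).mono_set
      (prod_mono uIoc_subset_uIcc uIoc_subset_uIcc)
  calc fourierCoeffOn hT (fun α => ∫ u in 0..L, g (α + u)) n
      = 1 / T * ∫ u in 0..L, ∫ α in 0..T, fourier (-n) (α : AddCircle T) * g (α + u) := by
        rw [fourierCoeffOn_zero_eq_integral]
        simp only [← intervalIntegral.integral_const_mul (fourier (-n) _)]
        rw [intervalIntegral_intervalIntegral_swap hint]
    _ = ∫ u in 0..L, fourierCoeffOn hT (fun x => g (x + u)) n := by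
        simp only [fourierCoeffOn_zero_eq_integral, intervalIntegral.integral_const_mul]
    _ = (∫ u in 0..L, fourier n (u : AddCircle T)) * fourierCoeffOn hT g n := by
        simp only [fourierCoeffOn_comp_add_right hT hgp, intervalIntegral.integral_mul_const]

theorem fourierCoeffOn_ofReal_neg (f : ℝ → ℝ) (n : ℤ) :
    fourierCoeffOn hT (fun x => (f x : ℂ)) (-n) =
      conj (fourierCoeffOn hT (fun x => (f x : ℂ)) n) := by
  simp only [fourierCoeffOn_zero_eq_integral, map_mul, intervalIntegral.integral_of_le hT.le,
    ← integral_conj, fourier_neg, conj_conj, neg_neg, conj_ofReal, map_div₀, map_one]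

theorem hasSum_sq_fourierCoeffOn_of_continuous {f : ℝ → ℂ} (hf : Continuous f) :
    HasSum (fun n => ‖fourierCoeffOn hT f n‖ ^ 2) (1 / T * ∫ x in 0..T, ‖f x‖ ^ 2) := by
  obtain ⟨C, hC⟩ := (isCompact_Icc (a := 0) (b := T)).exists_bound_of_continuousOn hf.continuousOn
  have hL2 : MemLp f 2 (volume.restrict (Ioc 0 T)) := MemLp.of_bound hf.aestronglyMeasurable C
    (ae_restrict_of_forall_mem measurableSet_Ioc fun x hx => hC x (Ioc_subset_Icc_self hx))
  simpa [one_div] using hasSum_sq_fourierCoeffOn hT hL2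

end Periodic

theorem fourier_coe_two_pi (n : ℤ) (x : ℝ) :
    fourier n (x : AddCircle (2 * π)) = exp (n * x * I) := by
  rw [fourier_coe_apply]
  congr 1
  push_cast
  field_simp

theorem fourier_coe_pi (k : ℤ) : fourier k (π : AddCircle (2 * π)) = (-1) ^ k := by
  rw [fourier_coe_two_pi, mul_assoc, exp_int_mul, exp_pi_mul_I]

theorem fourierCoeffOn_two_pi_eq (f : ℝ → ℂ) (n : ℤ) :
    fourierCoeffOn Real.two_pi_pos f n =
      1 / (2 * π) * ∫ θ in (0 : ℝ)..2 * π, f θ * exp (-(n * θ * I)) := by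
  rw [fourierCoeffOn_zero_eq_integral]
  simp only [fourier_coe_two_pi, mul_comm (exp _)]
  push_cast
  simp only [neg_mul]

theorem integral_exp_mul_I {z : ℂ} (hz : z ≠ 0) (b : ℝ) :
    ∫ u in (0 : ℝ)..b, exp (z * u * I) = (exp (z * b * I) - 1) / (z * I) := by
  simp_rw [mul_right_comm _ _ I]
  rw [integral_exp_mul_complex (mul_ne_zero hz I_ne_zero)]
  simp

/-- The integral `∫_{I₊^α} e^{2iθ} H(θ) dθ` over `I₊^α = [α, α + π/2) ∪ [α + π, α + 3π/2)`. -/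
noncomputable def quadrantIntegral (H : ℝ → ℂ) (α : ℝ) : ℂ :=
  (∫ θ in α..α + π / 2, exp (2 * θ * I) * H θ) +
    ∫ θ in (α + π)..(α + 3 * π / 2), exp (2 * θ * I) * H θ

noncomputable def quadrantMultiplier (m : ℤ) : ℂ :=
  (∫ u in (0 : ℝ)..π / 2, exp (m * u * I)) * (1 + (-1) ^ m)

theorem quadrantIntegral_eq {H : ℝ → ℂ} (hH : Continuous H) (α : ℝ) :
    quadrantIntegral H α =
      ∫ u in (0 : ℝ)..π / 2,
        fourier 2 ((α + u : ℝ) : AddCircle (2 * π)) * (H (α + u) + H (α + u + π)) := by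
  have hshift : ∫ θ in (α + π)..(α + 3 * π / 2), exp (2 * θ * I) * H θ =
      ∫ θ in α..α + π / 2, exp (2 * θ * I) * H (θ + π) := by
    rw [show α + 3 * π / 2 = α + π / 2 + π by ring,
      ← intervalIntegral.integral_comp_add_right]
    congr 1 with θ
    rw [show 2 * ((θ + π : ℝ) : ℂ) * I = 2 * θ * I + 2 * π * I by push_cast; ring,
      exp_add, exp_two_pi_mul_I, mul_one]
  rw [quadrantIntegral, hshift,
    ← intervalIntegral.integral_add ((by fun_prop : Continuous _).intervalIntegrable _ _)
      ((by fun_prop : Continuous _).intervalIntegrable _ _),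
    intervalIntegral.integral_comp_add_left
      (fun θ => fourier 2 (θ : AddCircle (2 * π)) * (H θ + H (θ + π))), add_zero]
  congr 1 with θ
  rw [fourier_coe_two_pi]
  push_cast
  ring

theorem continuous_quadrantIntegral {H : ℝ → ℂ} (hH : Continuous H) :
    Continuous (quadrantIntegral H) := by
  rw [funext (quadrantIntegral_eq hH)]
  fun_prop

theorem fourierCoeffOn_quadrantIntegral {H : ℝ → ℂ} (hH : Continuous H)
    (hHp : Periodic H (2 * π)) (m : ℤ) :
    fourierCoeffOn Real.two_pi_pos (quadrantIntegral H) m =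
      quadrantMultiplier m * fourierCoeffOn Real.two_pi_pos H (m - 2) := by
  set g : ℝ → ℂ := fun θ => fourier 2 (θ : AddCircle (2 * π)) * (H θ + H (θ + π))
  have hgp : Periodic g (2 * π) := fun θ => by
    simp only [g, AddCircle.coe_add_period, hHp θ, add_right_comm θ (2 * π) π, hHp (θ + π)]
  have hsign : (-1 : ℂ) ^ (m - 2) = (-1) ^ m := by
    rw [zpow_sub₀ (by norm_num)]
    norm_num
  rw [funext (quadrantIntegral_eq hH),
    fourierCoeffOn_intervalIntegral_comp_add_left _ (by fun_prop) hgp,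
    fourierCoeffOn_fourier_mul, ← Pi.add_def H, fourierCoeffOn_add _ hH (by fun_prop),
    fourierCoeffOn_comp_add_right _ hHp, fourier_coe_pi, hsign, quadrantMultiplier]
  simp only [fourier_coe_two_pi]
  ring

theorem norm_sq_quadrantMultiplier (m : ℤ) :
    ‖quadrantMultiplier m‖ ^ 2 =
      if m = 0 then π ^ 2 else if m % 4 = 2 then 16 / (m : ℝ) ^ 2 else 0 := by
  rcases eq_or_ne m 0 with rfl | hm
  · norm_num [quadrantMultiplier, abs_of_pos Real.pi_pos]
  have hexp : exp (m * (π / 2 : ℝ) * I) = I ^ m := by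
    rw [mul_assoc, exp_int_mul, ofReal_div, ofReal_ofNat, exp_pi_div_two_mul_I]
  obtain ⟨k, j, hj0, hj4, hkj⟩ : ∃ k j : ℤ, 0 ≤ j ∧ j < 4 ∧ m = 4 * k + j :=
    ⟨m / 4, m % 4, by omega, by omega, by omega⟩
  have hperiod : ∀ z : ℂ, z ^ 4 = 1 → z ^ m = z ^ j := by
    intro z hz
    have hz0 : z ≠ 0 := by rintro rfl; norm_num at hz
    rw [hkj, zpow_add₀ hz0, zpow_mul]
    norm_num [hz]
  have hmod : m % 4 = 2 ↔ j = 2 := by omega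
  simp only [if_neg hm, hmod]
  rw [quadrantMultiplier, integral_exp_mul_I (by exact_mod_cast hm), hexp,
    hperiod I I_pow_four, hperiod (-1) (by norm_num)]
  interval_cases j
  · norm_num
  · norm_num
  · norm_num [norm_div, norm_mul, div_pow, mul_pow]
    ring
  · norm_num

theorem fourier_quadrant_identity_general (h : ℝ → ℝ) (hcont : Continuous h)
    (hper : ∀ θ, h (θ + 2 * π) = h θ)
    (c : ℤ → ℂ)
    (hc : ∀ n : ℤ, c n = (1 / (2 * π)) *
      ∫ θ in (0:ℝ)..(2 * π), (h θ : ℂ) * Complex.exp (-(n * θ * Complex.I)))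
    (F : ℝ → ℂ)
    (hF : ∀ α : ℝ, F α =
      (∫ θ in α..(α + π / 2), Complex.exp (2 * θ * Complex.I) * (h θ : ℂ)) +
      (∫ θ in (α + π)..(α + 3 * π / 2),
        Complex.exp (2 * θ * Complex.I) * (h θ : ℂ))) :
    (1 / (2 * π)) * (∫ α in (0:ℝ)..(2 * π), (‖F α‖) ^ 2)
      = π ^ 2 * (‖c 2‖) ^ 2
        + 16 * ∑' n : ℤ, (if n % 4 = 2 then (‖c (n - 2)‖) ^ 2 / (n : ℝ) ^ 2 else 0) ∧
    π ^ 2 * (‖c 2‖) ^ 2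
        + 16 * ∑' n : ℤ, (if n % 4 = 2 then (‖c (n - 2)‖) ^ 2 / (n : ℝ) ^ 2 else 0)
      ≥ π ^ 2 * (‖c 2‖) ^ 2 + 4 * (‖c 0‖) ^ 2 := by
  set H : ℝ → ℂ := fun θ => (h θ : ℂ)
  have hH : Continuous H := by fun_prop
  have hHp : Periodic H (2 * π) := fun θ => by simp only [H, hper θ]
  obtain rfl : c = fourierCoeffOn Real.two_pi_pos H :=
    funext fun n => by rw [hc, fourierCoeffOn_two_pi_eq]
  obtain rfl : F = quadrantIntegral H := funext hF
  have hnorm_neg_two : ‖fourierCoeffOn Real.two_pi_pos H (-2)‖ =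
      ‖fourierCoeffOn Real.two_pi_pos H 2‖ := by
    rw [fourierCoeffOn_ofReal_neg, Complex.norm_conj]
  set s : ℤ → ℝ := fun n =>
    if n % 4 = 2 then ‖fourierCoeffOn Real.two_pi_pos H (n - 2)‖ ^ 2 / (n : ℝ) ^ 2 else 0
  have hcoeff : ∀ m, ‖fourierCoeffOn Real.two_pi_pos (quadrantIntegral H) m‖ ^ 2 =
      (if m = 0 then π ^ 2 * ‖fourierCoeffOn Real.two_pi_pos H 2‖ ^ 2 else 0) + 16 * s m := by
    intro m
    rw [fourierCoeffOn_quadrantIntegral hH hHp, norm_mul, mul_pow, norm_sq_quadrantMultiplier]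
    split_ifs with hm0 hm2
    · simp [s, hm0, hnorm_neg_two]
    · simp [s, hm2]
      ring
    · simp [s, hm2]
  have hs16 := (hasSum_sq_fourierCoeffOn_of_continuous Real.two_pi_pos
    (continuous_quadrantIntegral hH)).sub
    (hasSum_ite_eq (0 : ℤ) (π ^ 2 * ‖fourierCoeffOn Real.two_pi_pos H 2‖ ^ 2))
  simp only [hcoeff, add_sub_cancel_left] at hs16
  have hs : Summable s := (summable_mul_left_iff (by norm_num : (16 : ℝ) ≠ 0)).mp hs16.summable
  have hs2 : s 2 ≤ ∑' n, s n := hs.le_tsum 2 fun n _ => by positivity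
  have htsum := hs16.tsum_eq
  rw [tsum_mul_left] at htsum
  have hs2_eq : s 2 = ‖fourierCoeffOn Real.two_pi_pos H 0‖ ^ 2 / 4 := by norm_num [s]
  constructor <;> linarith

/-- Fourier-analytic identity and inequality: for `h : ℝ → ℝ` continuous,
nonnegative and `2π`-periodic with Fourier coefficients `c n`, and
`I₊^α = [α, α+π/2) ∪ [α+π, α+3π/2)`,
`(1/2π) ∫₀^{2π} |∫_{I₊^α} e^{2iθ} h(θ) dθ|² dα
  = π²|c₂|² + 16 Σ_{n ≡ 2 mod 4} |c_{n-2}|²/n² ≥ π²|c₂|² + 4|c₀|²`. -/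
theorem fourier_quadrant_identity (h : ℝ → ℝ) (hcont : Continuous h)
    (hnonneg : ∀ θ, 0 ≤ h θ) (hper : ∀ θ, h (θ + 2 * π) = h θ)
    (c : ℤ → ℂ)
    (hc : ∀ n : ℤ, c n = (1 / (2 * π)) *
      ∫ θ in (0:ℝ)..(2 * π), (h θ : ℂ) * Complex.exp (-(n * θ * Complex.I)))
    (F : ℝ → ℂ)
    (hF : ∀ α : ℝ, F α =
      (∫ θ in α..(α + π / 2), Complex.exp (2 * θ * Complex.I) * (h θ : ℂ)) +
      (∫ θ in (α + π)..(α + 3 * π / 2),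
        Complex.exp (2 * θ * Complex.I) * (h θ : ℂ))) :
    (1 / (2 * π)) * (∫ α in (0:ℝ)..(2 * π), (‖F α‖) ^ 2)
      = π ^ 2 * (‖c 2‖) ^ 2
        + 16 * ∑' n : ℤ, (if n % 4 = 2 then (‖c (n - 2)‖) ^ 2 / (n : ℝ) ^ 2 else 0) ∧
    π ^ 2 * (‖c 2‖) ^ 2
        + 16 * ∑' n : ℤ, (if n % 4 = 2 then (‖c (n - 2)‖) ^ 2 / (n : ℝ) ^ 2 else 0)
      ≥ π ^ 2 * (‖c 2‖) ^ 2 + 4 * (‖c 0‖) ^ 2 :=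
  fourier_quadrant_identity_general h hcont hper c hc F hF
end

section
/- Let V be the 5×2 matrix whose i-th row is (cos((i−1)π/5), sin((i−1)π/5)) for i = 1,…,5, and X = V Vᵀ. Then X is positive semidefinite of rank 2, |X_{ij}| = 1 if i = j, cos(π/5) if i − j ≡ ±1 (mod 5), and cos(2π/5) if i − j ≡ ±2 (mod 5); and ⟨J, X ∘ X⟩ / ⟨I + Ā, X ∘ X⟩ = 1 + 10cos(π/5)²/(5 + 10cos(2π/5)²) > 2.099, where Ā is the adjacency matrix of the complement of the 5-cycle C₅ (with vertices i and i±2 mod 5 adjacent in the complement), J the all-ones matrix, I the identity, and ∘ the Hadamard product. -/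
/-!
The rows of `V` are unit vectors at angles `kπ/5`, so `X i j = cos ((i - j)π/5)`. Since `|cos|`
has period `π`, `|X i j|` depends only on `i - j` in `Fin 5`, with values
`1, cos(π/5), cos(2π/5), cos(2π/5), cos(π/5)`. Hence `X ∘ X`, `J` and `Ā` are circulant, and the
trace of a product of circulants `C(v) C(w)` is `5 ∑ⱼ v(-j) w(j)`: the numerator is
`5 (1 + 2cos²(π/5) + 2cos²(2π/5))` and the denominator `5 (1 + 2cos²(2π/5))`. The rank is `2`
because the first two rows form a minor with determinant `sin(π/5) ≠ 0`, and the numerical bound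
follows from `cos(π/5) = (1 + √5)/4` and `cos(2π/5) = (√5 - 1)/4`.
-/

open Real Matrix

section Circulant

variable {R n : Type*} [NonUnitalNonAssocSemiring R] [Fintype n] [AddGroup n]

theorem Matrix.trace_circulant (v : n → R) : (circulant v).trace = Fintype.card n • v 0 := by
  simp [trace, circulant_apply]

theorem Matrix.trace_circulant_mul_circulant (v w : n → R) :
    (circulant v * circulant w).trace = Fintype.card n • ∑ j, v (-j) * w j := by
  simp [circulant_mul, trace_circulant, mulVec, dotProduct, circulant_apply]

end Circulant

theorem Matrix.rank_eq_card_of_det_submatrix_ne_zero {K m n : Type*} [Field K] [Fintype n]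
    [DecidableEq n] (A : Matrix m n K) (r : n → m) (h : (A.submatrix r id).det ≠ 0) :
    A.rank = Fintype.card n :=
  A.rank_le_card_width.antisymm (rank_of_det_ne_zero h ▸ A.rank_submatrix_le r id)

section UnitVectorRows

variable {ι : Type*} {θ : ι → ℝ} {V : Matrix ι (Fin 2) ℝ}
  (hV : ∀ i, V i 0 = cos (θ i) ∧ V i 1 = sin (θ i))
include hV

theorem mul_transpose_apply_of_rows_cos_sin (i j : ι) :
    (V * Vᵀ) i j = cos (θ i - θ j) := by
  simp [mul_apply, Fin.sum_univ_two, (hV i).1, (hV i).2, (hV j).1, (hV j).2, cos_sub]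

theorem det_submatrix_of_rows_cos_sin (r : Fin 2 → ι) :
    (V.submatrix r id).det = sin (θ (r 1) - θ (r 0)) := by
  simp only [det_fin_two, submatrix_apply, id_eq, (hV (r 0)).1, (hV (r 0)).2, (hV (r 1)).1,
    (hV (r 1)).2, sin_sub]
  ring

end UnitVectorRows

theorem cos_two_pi_div_five : cos (2 * π / 5) = (√5 - 1) / 4 := by
  rw [mul_div_assoc, cos_two_mul, cos_pi_div_five]
  linear_combination (Real.sq_sqrt (by norm_num : (0:ℝ) ≤ 5)) / 8

theorem abs_cos_fin_sub_mul_pi_div (n : ℕ) [NeZero n] (i j : Fin n) :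
    |cos ((i : ℕ) * π / n - (j : ℕ) * π / n)| = |cos (((i - j : Fin n) : ℕ) * π / n)| := by
  have hn : (n : ℝ) ≠ 0 := NeZero.ne _
  rcases le_or_gt j i with h | h
  · rw [Fin.coe_sub_iff_le.mpr h, Nat.cast_sub (Fin.le_def.mp h), sub_mul, sub_div]
  · rw [Fin.coe_sub_iff_lt.mpr h, Nat.cast_sub (by omega), Nat.cast_add,
      show ((n + i - j : ℝ)) * π / n = (i : ℕ) * π / n - (j : ℕ) * π / n + π by field_simp; ring,
      cos_add_pi, abs_neg]

theorem abs_cos_fin_five_mul_pi_div_five (d : Fin 5) :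
    |cos ((d : ℕ) * π / 5)| = ![1, cos (π / 5), cos (2 * π / 5), cos (2 * π / 5), cos (π / 5)] d := by
  have hpos : ∀ x, 0 < x → x < π / 2 → |cos x| = cos x := fun x h0 h1 =>
    abs_of_pos (cos_pos_of_mem_Ioo ⟨by linarith, h1⟩)
  have hπ := pi_pos
  fin_cases d
  · simp
  · simpa using hpos (π / 5) (by positivity) (by linarith)
  · simpa using hpos (2 * π / 5) (by positivity) (by linarith)
  · rw [show ((3 : ℕ) : ℝ) * π / 5 = π - 2 * π / 5 by push_cast; ring, cos_pi_sub, abs_neg]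
    simpa using hpos (2 * π / 5) (by positivity) (by linarith)
  · rw [show ((4 : ℕ) : ℝ) * π / 5 = π - π / 5 by push_cast; ring, cos_pi_sub, abs_neg]
    simpa using hpos (π / 5) (by positivity) (by linarith)

theorem vecFive_sub_eq_ite_cycle {α : Type*} (x y z : α) (i j : Fin 5) :
    ![x, y, z, z, y] (i - j) =
      if i = j then x
      else if (i.val + 1) % 5 = j.val ∨ (j.val + 1) % 5 = i.val then y else z := by
  fin_cases i <;> fin_cases j <;> rfl

theorem vecFive_sub_eq_ite_cycleCompl {α : Type*} (x y : α) (i j : Fin 5) :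
    ![x, x, y, y, x] (i - j) =
      if (i.val + 2) % 5 = j.val ∨ (j.val + 2) % 5 = i.val then y else x := by
  fin_cases i <;> fin_cases j <;> rfl

-- The margin is only about `4 * 10⁻⁴`: it needs `√5 > 2.2358`.
theorem lt_one_add_cos_pi_div_five_ratio :
    (2.099 : ℝ) < 1 + 10 * cos (π / 5) ^ 2 / (5 + 10 * cos (2 * π / 5) ^ 2) := by
  have h5 : √5 ^ 2 = 5 := Real.sq_sqrt (by norm_num)
  have hlo : (2.2358 : ℝ) < √5 := by nlinarith [Real.sqrt_nonneg 5]
  rw [cos_pi_div_five, cos_two_pi_div_five, ← sub_lt_iff_lt_add', lt_div_iff₀ (by positivity)]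
  nlinarith

section RowsAtMultiplesOfPiDivFive

variable {V : Matrix (Fin 5) (Fin 2) ℝ}
  (hV : ∀ i : Fin 5, V i 0 = cos ((i : ℕ) * π / 5) ∧ V i 1 = sin ((i : ℕ) * π / 5))
include hV

theorem abs_mul_transpose_apply_eq_vecFive (i j : Fin 5) :
    |(V * Vᵀ) i j| = ![1, cos (π / 5), cos (2 * π / 5), cos (2 * π / 5), cos (π / 5)] (i - j) := by
  rw [mul_transpose_apply_of_rows_cos_sin hV, ← abs_cos_fin_five_mul_pi_div_five]
  simpa using abs_cos_fin_sub_mul_pi_div 5 i j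

theorem hadamard_mul_transpose_eq_circulant :
    hadamard (V * Vᵀ) (V * Vᵀ) =
      circulant fun d => ![1, cos (π / 5), cos (2 * π / 5), cos (2 * π / 5), cos (π / 5)] d ^ 2 := by
  ext i j
  rw [hadamard_apply, circulant_apply, ← abs_mul_transpose_apply_eq_vecFive hV, sq_abs, sq]

theorem rank_mul_transpose_eq_two : (V * Vᵀ).rank = 2 := by
  rw [rank_self_mul_transpose, rank_eq_card_of_det_submatrix_ne_zero V ![0, 1],
    Fintype.card_fin]
  rw [det_submatrix_of_rows_cos_sin hV]
  simpa using (sin_pos_of_pos_of_lt_pi (by positivity) (by linarith [pi_pos])).ne'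

end RowsAtMultiplesOfPiDivFive

/-- The explicit rank-2 witness for `χ'_{vec,3}(C₅) > 2.099`: rows of `V` are
the unit vectors at angles `(i-1)π/5`, `X = V Vᵀ`. Then `X` is PSD of rank 2,
its entries have the given absolute values, and the ratio
`⟨J, X∘X⟩ / ⟨I + Ā, X∘X⟩` equals `1 + 10cos(π/5)²/(5 + 10cos(2π/5)²) > 2.099`,
where `Ā` is the adjacency matrix of the complement of the 5-cycle. -/
theorem c5_witness :
    ∀ (V : Matrix (Fin 5) (Fin 2) ℝ),
    (∀ i : Fin 5, V i 0 = Real.cos (i * Real.pi / 5) ∧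
                  V i 1 = Real.sin (i * Real.pi / 5)) →
    ∀ (Abar J : Matrix (Fin 5) (Fin 5) ℝ),
    (∀ i j : Fin 5, Abar i j =
      if (i.val + 2) % 5 = j.val ∨ (j.val + 2) % 5 = i.val then 1 else 0) →
    (∀ i j : Fin 5, J i j = 1) →
    let X := V * Vᵀ
    X.PosSemidef ∧ X.rank = 2 ∧
    (∀ i j : Fin 5, |X i j| =
      if i = j then 1
      else if (i.val + 1) % 5 = j.val ∨ (j.val + 1) % 5 = i.val
        then Real.cos (Real.pi / 5)
        else Real.cos (2 * Real.pi / 5)) ∧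
    (J * Matrix.hadamard X X).trace / (((1 + Abar) * Matrix.hadamard X X).trace)
      = 1 + 10 * Real.cos (Real.pi / 5) ^ 2 / (5 + 10 * Real.cos (2 * Real.pi / 5) ^ 2) ∧
    (J * Matrix.hadamard X X).trace / (((1 + Abar) * Matrix.hadamard X X).trace)
      > 2.099 := by
  intro V hV Abar J hA hJ X
  set a := cos (π / 5)
  set b := cos (2 * π / 5)
  have hXX := hadamard_mul_transpose_eq_circulant hV
  have hJc : J = circulant 1 := by
    ext i j
    exact hJ i j
  have hAc : Abar = circulant ![0, 0, 1, 1, 0] := by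
    ext i j
    rw [hA, circulant_apply, vecFive_sub_eq_ite_cycleCompl]
  have hnum : (J * hadamard X X).trace = 5 * (1 + 2 * a ^ 2 + 2 * b ^ 2) := by
    rw [hJc, hXX, trace_circulant_mul_circulant]
    simp only [Fintype.card_fin, Pi.one_apply, one_mul, Fin.sum_univ_five, Fin.isValue,
      cons_val_zero, one_pow, cons_val_one, cons_val, nsmul_eq_mul, Nat.cast_ofNat]
    ring
  have hden : ((1 + Abar) * hadamard X X).trace = 5 * (1 + 2 * b ^ 2) := by
    rw [add_mul, trace_add, one_mul, hAc, hXX, trace_circulant, trace_circulant_mul_circulant]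
    simp only [Fintype.card_fin, Fin.isValue, cons_val_zero, one_pow, nsmul_eq_mul,
      Nat.cast_ofNat, Fin.sum_univ_five, neg_zero, cons_val, cons_val_one, zero_mul, one_mul]
    ring
  have hratio : (J * hadamard X X).trace / ((1 + Abar) * hadamard X X).trace
      = 1 + 10 * a ^ 2 / (5 + 10 * b ^ 2) := by
    rw [hnum, hden]
    field_simp
    ring
  refine ⟨by simpa using posSemidef_self_mul_conjTranspose V, rank_mul_transpose_eq_two hV,
    fun i j => (abs_mul_transpose_apply_eq_vecFive hV i j).trans (vecFive_sub_eq_ite_cycle ..),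
    hratio, hratio ▸ lt_one_add_cos_pi_div_five_ratio⟩
end

section
/- Let G be a graph with adjacency matrix A, m edges and clique number ω. If the Motzkin–Straus inequality holds in the form: for every completely positive n×n matrix Z, ⟨A, Z⟩ ≤ (1 − 1/ω)·⟨J, Z⟩, then for any completely positive matrix X, ⟨A, X⟩² ≤ (1 − 1/ω)·2m·⟨X, X⟩. -/
/-- A matrix is completely positive if it is a finite sum of `x xᵀ` with `x`
entrywise nonnegative. -/
def Matrix.CompletelyPositive {n : ℕ} (M : Matrix (Fin n) (Fin n) ℝ) : Prop :=
  ∃ (k : ℕ) (x : Fin k → (Fin n → ℝ)),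
    (∀ i j, 0 ≤ x i j) ∧ M = ∑ i, Matrix.vecMulVec (x i) (x i)

lemma cp_symm {n : ℕ} {X : Matrix (Fin n) (Fin n) ℝ} (hX : X.CompletelyPositive) :
    ∀ a b, X a b = X b a := by
  obtain ⟨k, x, hx, rfl⟩ := hX
  intro a b
  simp only [Matrix.sum_apply, Matrix.vecMulVec_apply]
  exact Finset.sum_congr rfl fun i _ => mul_comm _ _

/-- The entrywise (Hadamard) square of a completely positive matrix is
completely positive. -/
lemma cp_sq {n : ℕ} {X : Matrix (Fin n) (Fin n) ℝ} (hX : X.CompletelyPositive) :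
    (Matrix.of fun a b => X a b ^ 2).CompletelyPositive := by
  obtain ⟨k, x, hx, rfl⟩ := hX
  refine ⟨k * k, fun p => x (finProdFinEquiv.symm p).1 * x (finProdFinEquiv.symm p).2,
    fun p j => mul_nonneg (hx _ _) (hx _ _), ?_⟩
  ext a b
  simp only [Matrix.of_apply, Matrix.sum_apply, Matrix.vecMulVec_apply, Pi.mul_apply]
  rw [← Equiv.sum_comp finProdFinEquiv
    (fun p => x (finProdFinEquiv.symm p).1 a * x (finProdFinEquiv.symm p).2 a *
      (x (finProdFinEquiv.symm p).1 b * x (finProdFinEquiv.symm p).2 b))]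
  simp only [Equiv.symm_apply_apply]
  rw [Fintype.sum_prod_type, sq, Finset.sum_mul_sum]
  exact Finset.sum_congr rfl fun i _ => Finset.sum_congr rfl fun j _ => by ring

/-- If the Motzkin–Straus inequality `⟨A, Z⟩ ≤ (1 - 1/ω)⟨J, Z⟩` holds for
every completely positive matrix `Z` (with `A` the adjacency matrix of a
graph `G` with `m` edges and clique number `ω`), then for every completely
positive matrix `X`, `⟨A, X⟩² ≤ (1 - 1/ω)·2m·⟨X, X⟩`. -/
theorem cp_cauchy_schwarz_bound {V : Type*} [Fintype V] [DecidableEq V]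
    (G : SimpleGraph V) [DecidableRel G.Adj]
    (e : V ≃ Fin (Fintype.card V)) :
    let A := (G.adjMatrix ℝ).submatrix e.symm e.symm
    let J : Matrix (Fin (Fintype.card V)) (Fin (Fintype.card V)) ℝ :=
      Matrix.of fun _ _ => 1
    let ω := G.cliqueNum
    let m := G.edgeFinset.card
    (∀ Z, Z.CompletelyPositive → (A * Z).trace ≤ (1 - 1 / (ω : ℝ)) * (J * Z).trace) →
    ∀ X, X.CompletelyPositive →
      ((A * X).trace) ^ 2 ≤ (1 - 1 / (ω : ℝ)) * (2 * m) * (X * X).trace := by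
  intro A J ω m h X hX
  have hsym := cp_symm hX
  set Y : Matrix (Fin (Fintype.card V)) (Fin (Fintype.card V)) ℝ :=
    Matrix.of fun a b => X a b ^ 2 with hYdef
  have hY : Y.CompletelyPositive := cp_sq hX
  have hA : ∀ p q, A p q = if G.Adj (e.symm p) (e.symm q) then (1:ℝ) else 0 := by
    intro p q; simp [A, Matrix.submatrix_apply]
  have hA2 : ∀ p q, A p q ^ 2 = A p q := by
    intro p q; rw [hA]; split <;> norm_num
  have hAnn : ∀ p q, 0 ≤ A p q := by
    intro p q; rw [hA]; split <;> norm_num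
  -- trace formulas
  have trace_mul : ∀ (M N : Matrix (Fin (Fintype.card V)) (Fin (Fintype.card V)) ℝ),
      (M * N).trace = ∑ p, ∑ q, M p q * N q p := by
    intro M N; simp [Matrix.trace, Matrix.mul_apply, Matrix.diag]
  have tAX : (A * X).trace = ∑ p, ∑ q, A p q * X p q := by
    rw [trace_mul]
    exact Finset.sum_congr rfl fun p _ => Finset.sum_congr rfl fun q _ => by rw [hsym q p]
  have tAY : (A * Y).trace = ∑ p, ∑ q, A p q * (X p q) ^ 2 := by
    rw [trace_mul]
    refine Finset.sum_congr rfl fun p _ => Finset.sum_congr rfl fun q _ => ?_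
    simp only [hYdef, Matrix.of_apply, hsym q p]
  have tJY : (J * Y).trace = ∑ p, ∑ q, (X p q) ^ 2 := by
    rw [trace_mul]
    refine Finset.sum_congr rfl fun p _ => Finset.sum_congr rfl fun q _ => ?_
    simp only [hYdef, J, Matrix.of_apply, hsym q p, one_mul]
  have tXX : (X * X).trace = ∑ p, ∑ q, (X p q) ^ 2 := by
    rw [trace_mul]
    exact Finset.sum_congr rfl fun p _ => Finset.sum_congr rfl fun q _ => by
      rw [hsym q p, sq]
  -- sum of entries of A equals 2m
  have hAsum : ∑ p, ∑ q, A p q = 2 * m := by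
    have inner : ∀ i : V, ∑ q, (G.adjMatrix ℝ) i (e.symm q) = ∑ j : V, (G.adjMatrix ℝ) i j :=
      fun i => Equiv.sum_comp e.symm _
    have step1 : ∑ p, ∑ q, A p q = ∑ i : V, ∑ j : V, (G.adjMatrix ℝ) i j :=
      calc ∑ p, ∑ q, A p q = ∑ p, ∑ j : V, (G.adjMatrix ℝ) (e.symm p) j :=
            Finset.sum_congr rfl fun p _ => inner (e.symm p)
        _ = _ := Equiv.sum_comp e.symm (fun i => ∑ j : V, (G.adjMatrix ℝ) i j)
    rw [step1]
    have hdeg : ∀ i : V, ∑ j : V, (G.adjMatrix ℝ) i j = (G.degree i : ℝ) := by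
      intro i
      simp [SimpleGraph.adjMatrix_apply, SimpleGraph.degree, Finset.sum_boole,
        SimpleGraph.neighborFinset]
    simp_rw [hdeg]
    rw [← Nat.cast_sum, G.sum_degrees_eq_twice_card_edges]
    push_cast; ring
  -- Cauchy–Schwarz
  have cs := Finset.sum_mul_sq_le_sq_mul_sq Finset.univ
    (fun pq : Fin (Fintype.card V) × Fin (Fintype.card V) => A pq.1 pq.2)
    (fun pq => A pq.1 pq.2 * X pq.1 pq.2)
  simp only [Fintype.sum_prod_type] at cs
  have e1 : ∑ p, ∑ q, A p q * (A p q * X p q) = ∑ p, ∑ q, A p q * X p q := by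
    refine Finset.sum_congr rfl fun p _ => Finset.sum_congr rfl fun q _ => ?_
    rw [← mul_assoc, ← sq, hA2]
  have e2 : ∑ p, ∑ q, (A p q * X p q) ^ 2 = ∑ p, ∑ q, A p q * (X p q) ^ 2 := by
    refine Finset.sum_congr rfl fun p _ => Finset.sum_congr rfl fun q _ => ?_
    rw [mul_pow, hA2]
  have e3 : ∑ p, ∑ q, (A p q) ^ 2 = 2 * m := by simp_rw [hA2]; exact hAsum
  rw [e1, e2, e3] at cs
  have h1 := h Y hY
  rw [tAY, tJY] at h1
  have hm : (0:ℝ) ≤ 2 * m := by positivity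
  calc ((A * X).trace) ^ 2 = (∑ p, ∑ q, A p q * X p q) ^ 2 := by rw [tAX]
    _ ≤ 2 * m * (∑ p, ∑ q, A p q * (X p q) ^ 2) := cs
    _ ≤ 2 * m * ((1 - 1 / (ω : ℝ)) * (∑ p, ∑ q, (X p q) ^ 2)) :=
        mul_le_mul_of_nonneg_left h1 hm
    _ = (1 - 1 / (ω : ℝ)) * (2 * m) * (X * X).trace := by rw [tXX]; ring
end

section
/- Let v₁, v₂ ∈ ℝⁿ and λ₁, λ₂ ≥ 0. Set X = λ₁ v₁v₁ᵀ + λ₂ v₂v₂ᵀ and Y = v₁v₂ᵀ + v₂v₁ᵀ. Then (X ∘ X) + λ₁λ₂ (Y ∘ Y) = (λ₁(v₁∘v₁) + λ₂(v₂∘v₂))(λ₁(v₁∘v₁) + λ₂(v₂∘v₂))ᵀ + 4λ₁λ₂ (v₁∘v₂)(v₁∘v₂)ᵀ; in particular this matrix is positive semidefinite, entrywise nonnegative, of rank at most 2, and completely positive. -/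
/-!
Both sides of the identity are entrywise polynomial in `v₁, v₂, λ₁, λ₂`. For the rest, write
`λ₁ = r₁²`, `λ₂ = r₂²` and `w = v₁ ∘ v₂`: then `u ± 2 r₁ r₂ w = (r₁ v₁ ± r₂ v₂)^{∘2}` are
entrywise nonnegative, and the parallelogram law
`(a + b)(a + b)ᵀ + (a - b)(a - b)ᵀ = 2 (a aᵀ + b bᵀ)` writes `M` as a sum of two rank-one
matrices `x xᵀ` with `x ≥ 0`. Such a sum is positive semidefinite, entrywise nonnegative and
of rank at most two.
-/

open Matrix

section SumVecMulVec

variable {κ ι R : Type*} [Fintype κ]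

theorem sum_vecMulVec_eq_transpose_mul [CommSemiring R] (x y : κ → ι → R) :
    ∑ k, vecMulVec (x k) (y k) = (of x)ᵀ * of y := by
  ext i j
  simp [Matrix.sum_apply, mul_apply, vecMulVec_apply]

theorem rank_sum_vecMulVec_le [CommRing R] [StrongRankCondition R] [Fintype ι]
    (x y : κ → ι → R) : (∑ k, vecMulVec (x k) (y k)).rank ≤ Fintype.card κ := by
  rw [sum_vecMulVec_eq_transpose_mul]
  exact (rank_mul_le_left _ _).trans (rank_le_card_width _)

theorem sum_vecMulVec_apply_nonneg [CommSemiring R] [PartialOrder R] [IsOrderedRing R]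
    {x y : κ → ι → R} (hx : ∀ k i, 0 ≤ x k i) (hy : ∀ k j, 0 ≤ y k j) (i j : ι) :
    0 ≤ (∑ k, vecMulVec (x k) (y k)) i j := by
  rw [Matrix.sum_apply]
  exact Finset.sum_nonneg fun k _ => mul_nonneg (hx k i) (hy k j)

end SumVecMulVec

section HadamardSquare

variable {ι R : Type*} [CommRing R]

theorem hadamard_sq_add_smul_hadamard_sq_eq (v₁ v₂ : ι → R) (l₁ l₂ : R) :
    let X := l₁ • vecMulVec v₁ v₁ + l₂ • vecMulVec v₂ v₂
    let Y := vecMulVec v₁ v₂ + vecMulVec v₂ v₁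
    let u := l₁ • (v₁ * v₁) + l₂ • (v₂ * v₂)
    X ⊙ X + (l₁ * l₂) • Y ⊙ Y
      = vecMulVec u u + (4 * (l₁ * l₂)) • vecMulVec (v₁ * v₂) (v₁ * v₂) := by
  ext i j
  simp only [Matrix.add_apply, Matrix.smul_apply, hadamard_apply, vecMulVec_apply, Pi.add_apply,
    Pi.smul_apply, Pi.mul_apply, smul_eq_mul]
  ring

theorem vecMulVec_add_smul_vecMulVec_eq {l₁ l₂ r₁ r₂ s : R} (h₁ : r₁ ^ 2 = l₁)
    (h₂ : r₂ ^ 2 = l₂) (hs : 2 * s ^ 2 = 1) (v₁ v₂ : ι → R) :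
    let u := l₁ • (v₁ * v₁) + l₂ • (v₂ * v₂)
    let p := s • (r₁ • v₁ + r₂ • v₂) ^ 2
    let q := s • (r₁ • v₁ - r₂ • v₂) ^ 2
    vecMulVec u u + (4 * (l₁ * l₂)) • vecMulVec (v₁ * v₂) (v₁ * v₂)
      = vecMulVec p p + vecMulVec q q := by
  ext i j
  simp only [Matrix.add_apply, Matrix.smul_apply, vecMulVec_apply, Pi.add_apply, Pi.sub_apply,
    Pi.smul_apply, Pi.mul_apply, Pi.pow_apply, smul_eq_mul]
  subst h₁ h₂
  linear_combination
    (-(r₁ ^ 2 * (v₁ i * v₁ i) + r₂ ^ 2 * (v₂ i * v₂ i))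
        * (r₁ ^ 2 * (v₁ j * v₁ j) + r₂ ^ 2 * (v₂ j * v₂ j))
      - 4 * r₁ ^ 2 * r₂ ^ 2 * (v₁ i * v₂ i) * (v₁ j * v₂ j)) * hs

end HadamardSquare

/-- For `v₁, v₂ ∈ ℝⁿ` and `λ₁, λ₂ ≥ 0`, with `X = λ₁v₁v₁ᵀ + λ₂v₂v₂ᵀ` and
`Y = v₁v₂ᵀ + v₂v₁ᵀ`, the matrix `(X∘X) + λ₁λ₂(Y∘Y)` equals
`u uᵀ + 4λ₁λ₂ (v₁∘v₂)(v₁∘v₂)ᵀ` with `u = λ₁(v₁∘v₁) + λ₂(v₂∘v₂)`; in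
particular it is PSD, entrywise nonnegative, of rank at most 2, and
completely positive. -/
theorem hadamard_sq_identity {n : ℕ} (v₁ v₂ : Fin n → ℝ) (l₁ l₂ : ℝ)
    (hl₁ : 0 ≤ l₁) (hl₂ : 0 ≤ l₂) :
    let X := l₁ • Matrix.vecMulVec v₁ v₁ + l₂ • Matrix.vecMulVec v₂ v₂
    let Y := Matrix.vecMulVec v₁ v₂ + Matrix.vecMulVec v₂ v₁
    let M := Matrix.hadamard X X + (l₁ * l₂) • Matrix.hadamard Y Y
    let u := l₁ • (v₁ * v₁) + l₂ • (v₂ * v₂)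
    M = Matrix.vecMulVec u u
          + (4 * (l₁ * l₂)) • Matrix.vecMulVec (v₁ * v₂) (v₁ * v₂) ∧
    M.PosSemidef ∧ (∀ i j, 0 ≤ M i j) ∧ M.rank ≤ 2 ∧
    (∃ (k : ℕ) (x : Fin k → (Fin n → ℝ)),
      (∀ i j, 0 ≤ x i j) ∧ M = ∑ i, Matrix.vecMulVec (x i) (x i)) := by
  intro X Y M u
  have hM : M = vecMulVec u u + (4 * (l₁ * l₂)) • vecMulVec (v₁ * v₂) (v₁ * v₂) :=
    hadamard_sq_add_smul_hadamard_sq_eq v₁ v₂ l₁ l₂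
  let x : Fin 2 → Fin n → ℝ :=
    ![(√2)⁻¹ • (√l₁ • v₁ + √l₂ • v₂) ^ 2, (√2)⁻¹ • (√l₁ • v₁ - √l₂ • v₂) ^ 2]
  have hx : ∀ k i, 0 ≤ x k i := by
    intro k i
    fin_cases k <;> exact mul_nonneg (by positivity) (sq_nonneg _)
  have hMx : M = ∑ k, vecMulVec (x k) (x k) := by
    have hs : 2 * ((√2)⁻¹) ^ 2 = (1 : ℝ) := by
      rw [inv_pow, Real.sq_sqrt zero_le_two]
      norm_num
    rw [hM, Fin.sum_univ_two]
    exact vecMulVec_add_smul_vecMulVec_eq (Real.sq_sqrt hl₁) (Real.sq_sqrt hl₂) hs v₁ v₂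
  refine ⟨hM, ?_, ?_, ?_, 2, x, hx, hMx⟩
  · rw [hMx]
    exact posSemidef_sum _ fun k _ => by simpa using posSemidef_vecMulVec_self_star (x k)
  · rw [hMx]
    exact sum_vecMulVec_apply_nonneg hx hx
  · rw [hMx]
    simpa using rank_sum_vecMulVec_le x x
end

section
/- Let G be a graph with n vertices and adjacency matrix A, and suppose the complement graph is not a disjoint union of complete graphs, i.e. the adjacency matrix Ā of the complement has an eigenvalue strictly less than −1. Then the semidefinite program sup{⟨J, Z⟩ : ⟨I + Ā, Z⟩ = 1, Z ⪰ 0} is unbounded (the supremum is +∞). -/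
/-!
With `P = eᵢeᵢᵀ` and `Q = uuᵀ` one has `⟨I + Ā, P⟩ = 1` (the diagonal of `Ā` vanishes),
`⟨J, P⟩ = 1`, `⟨I + Ā, Q⟩ = (1 + μ)‖u‖² < 0` and `⟨J, Q⟩ = (∑ uᵢ)² ≥ 0`. So `Q` is a
direction of recession: for every `s ≥ 1`, the matrix `s P + a Q` with
`a = (s - 1) / (-(1 + μ)‖u‖²) ≥ 0` is feasible and has objective at least `s`.
-/

open scoped Matrix

namespace Matrix

variable {n : Type*} [Fintype n]

theorem trace_mul_vecMulVec_self {R : Type*} [CommSemiring R] (M : Matrix n n R) (v : n → R) :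
    (M * vecMulVec v v).trace = M *ᵥ v ⬝ᵥ v := by
  rw [mul_vecMulVec, trace_vecMulVec]

theorem exists_posSemidef_trace_mul_eq_one_and_lt {M C P Q : Matrix n n ℝ}
    (hP : P.PosSemidef) (hQ : Q.PosSemidef)
    (hMP : 0 < (M * P).trace) (hCP : 0 < (C * P).trace)
    (hMQ : (M * Q).trace < 0) (hCQ : 0 ≤ (C * Q).trace) (t : ℝ) :
    ∃ Z : Matrix n n ℝ, Z.PosSemidef ∧ (M * Z).trace = 1 ∧ t < (C * Z).trace := by
  set s := (|t| + 1) / (C * P).trace + 1 / (M * P).trace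
  set a := (1 - s * (M * P).trace) / (M * Q).trace
  have hs : 0 ≤ s := by positivity
  have hsM : 1 ≤ s * (M * P).trace := by
    have : 0 ≤ (|t| + 1) / (C * P).trace * (M * P).trace := by positivity
    simp only [s, add_mul, one_div_mul_cancel hMP.ne']
    linarith
  have hsC : t < s * (C * P).trace := by
    have : 0 ≤ 1 / (M * P).trace * (C * P).trace := by positivity
    simp only [s, add_mul, div_mul_cancel₀ _ hCP.ne']
    linarith [le_abs_self t]
  have ha : 0 ≤ a := div_nonneg_of_nonpos (by linarith) hMQ.le
  refine ⟨s • P + a • Q, (hP.smul hs).add (hQ.smul ha), ?_, ?_⟩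
  · simp only [mul_add, Matrix.mul_smul, trace_add, trace_smul, smul_eq_mul, a,
      div_mul_cancel₀ _ hMQ.ne]
    ring
  · simp only [mul_add, Matrix.mul_smul, trace_add, trace_smul, smul_eq_mul]
    nlinarith [mul_nonneg ha hCQ]

end Matrix

open Matrix

/-- If the adjacency matrix `Ā` of the complement of `G` has an eigenvalue
strictly less than `-1`, then the SDP
`sup{⟨J, Z⟩ : ⟨I + Ā, Z⟩ = 1, Z ⪰ 0}` is unbounded. -/
theorem sdp_unbounded {V : Type*} [Fintype V] [DecidableEq V]
    (G : SimpleGraph V) [DecidableRel G.Adj]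
    (Abar : Matrix V V ℝ) (hAbar : Abar = Gᶜ.adjMatrix ℝ)
    (μ : ℝ) (u : V → ℝ) (hu : u ≠ 0)
    (hμ : μ < -1) (heig : Abar.mulVec u = μ • u) :
    let J : Matrix V V ℝ := Matrix.of fun _ _ => 1
    ∀ t : ℝ, ∃ Z : Matrix V V ℝ, Z.PosSemidef ∧
      ((1 + Abar) * Z).trace = 1 ∧ t < (J * Z).trace := by
  intro J
  obtain ⟨i, -⟩ := Function.ne_iff.mp hu
  set e : V → ℝ := Pi.single i 1
  have hdiag : Abar i i = 0 := by simp [hAbar]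
  have hMe : 0 < ((1 + Abar) * vecMulVec e e).trace := by
    simp [trace_mul_vecMulVec_self, e, hdiag]
  have hJe : 0 < (J * vecMulVec e e).trace := by
    simp [trace_mul_vecMulVec_self, e, J]
  have hMu : ((1 + Abar) * vecMulVec u u).trace < 0 := by
    have hpos : 0 < u ⬝ᵥ u := dotProduct_self_star_pos_iff.mpr hu
    rw [trace_mul_vecMulVec_self, add_mulVec, one_mulVec, heig, add_dotProduct,
      smul_dotProduct, smul_eq_mul]
    nlinarith
  have hJu : 0 ≤ (J * vecMulVec u u).trace := by
    have hsum : J *ᵥ u ⬝ᵥ u = (∑ j, u j) * ∑ j, u j := by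
      simp only [J, mulVec, dotProduct, of_apply, one_mul, ← Finset.mul_sum]
    rw [trace_mul_vecMulVec_self, hsum]
    exact mul_self_nonneg _
  exact exists_posSemidef_trace_mul_eq_one_and_lt (posSemidef_vecMulVec_self_star e)
    (posSemidef_vecMulVec_self_star u) hMe hJe hMu hJu
end
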